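/- arXiv:math/0007147 — 2 statements merged into one kernel-verified Lean document; each statement's English description precedes it below -/
import Mathlib

section
/- Let A be a finite-dimensional algebra over a field k, let Forget be the forgetful functor from finite-dimensional left A-modules to vector spaces, and let θ : A → End(Forget) be given by θ(a)_V = (action of a on V). Then θ is an isomorphism of algebras between A and the algebra End(Forget) of natural endomorphisms of the forgetful functor. -/
noncomputable section

/-- A natural endomorphism of the forgetful functor from finite-dimensional `A`-modules to
`k`-vector spaces: a family of `k`-linear maps `V → V`, indexed by all finite-dimensional
`A`-modules `V`, commuting with every `A`-module map. -/
structure NatEnd (k A : Type) [Field k] [Ring A] [Algebra k A] : Type 1 where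
  app : ∀ (V : Type) [AddCommGroup V] [Module k V] [Module A V] [IsScalarTower k A V]
    [SMulCommClass k A V] [FiniteDimensional k V], V →ₗ[k] V
  naturality : ∀ (V W : Type) [AddCommGroup V] [Module k V] [Module A V] [IsScalarTower k A V]
    [SMulCommClass k A V] [FiniteDimensional k V]
    [AddCommGroup W] [Module k W] [Module A W] [IsScalarTower k A W]
    [SMulCommClass k A W] [FiniteDimensional k W]
    (f : V →ₗ[A] W) (v : V), f (app V v) = app W (f v)

/-- The action of `a` on `V` as a `k`-linear map. -/
def thetaApp (k A : Type) [Field k] [Ring A] [Algebra k A] (a : A) (V : Type)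
    [AddCommGroup V] [Module k V] [Module A V] [IsScalarTower k A V]
    [SMulCommClass k A V] [FiniteDimensional k V] : V →ₗ[k] V where
  toFun v := a • v
  map_add' v w := smul_add a v w
  map_smul' c v := (smul_comm c a v).symm

/-- The canonical map `θ : A → End(Forget)`, `θ(a)_V = (action of a on V)`. -/
def theta (k A : Type) [Field k] [Ring A] [Algebra k A] (a : A) : NatEnd k A where
  app := thetaApp k A a
  naturality := by
    intro V W _ _ _ _ _ _ _ _ _ _ _ _ f v
    exact map_smul f a v

namespace NatEnd

variable {k A : Type} [Field k] [Ring A] [Algebra k A]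

@[ext]
theorem ext {η ζ : NatEnd k A}
    (h : ∀ (V : Type) [AddCommGroup V] [Module k V] [Module A V] [IsScalarTower k A V]
      [SMulCommClass k A V] [FiniteDimensional k V] (v : V), η.app V v = ζ.app V v) :
    η = ζ := by
  obtain ⟨app, _⟩ := η
  obtain ⟨app', _⟩ := ζ
  congr
  funext V _ _ _ _ _ _
  exact LinearMap.ext (h V)

/-- Naturality along the `A`-linear map `x ↦ x • v : A → V`. -/
theorem app_eq_smul [FiniteDimensional k A] (η : NatEnd k A) (V : Type) [AddCommGroup V]
    [Module k V] [Module A V] [IsScalarTower k A V] [SMulCommClass k A V] [FiniteDimensional k V]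
    (v : V) : η.app V v = η.app A 1 • v := by
  simpa using (η.naturality A V (LinearMap.toSpanSingleton A V v) 1).symm

end NatEnd

section Theta

variable (k A : Type) [Field k] [Ring A] [Algebra k A]

@[simp]
theorem theta_app (a : A) (V : Type) [AddCommGroup V] [Module k V] [Module A V]
    [IsScalarTower k A V] [SMulCommClass k A V] [FiniteDimensional k V] (v : V) :
    (theta k A a).app V v = a • v :=
  rfl

theorem theta_injective [FiniteDimensional k A] : Function.Injective (theta k A) := by
  intro a b h
  simpa using congrArg (fun η : NatEnd k A => η.app A 1) h

theorem theta_surjective [FiniteDimensional k A] : Function.Surjective (theta k A) :=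
  fun η => ⟨η.app A 1, NatEnd.ext fun V _ _ _ _ _ _ v => (η.app_eq_smul V v).symm⟩

end Theta

/-- For a finite-dimensional algebra `A` over a field `k`, the map
`θ : A → End(Forget)` given by `θ(a)_V = (action of a on V)` is an isomorphism of algebras
onto the algebra of natural endomorphisms of the forgetful functor (whose multiplication is
componentwise composition). -/
theorem theta_bijective_algebra_iso
    (k A : Type) [Field k] [Ring A] [Algebra k A] [FiniteDimensional k A] :
    Function.Bijective (theta k A) ∧
      (∀ (a b : A) (V : Type) [AddCommGroup V] [Module k V] [Module A V] [IsScalarTower k A V]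
          [SMulCommClass k A V] [FiniteDimensional k V] (v : V),
        (theta k A (a * b)).app V v = (theta k A a).app V ((theta k A b).app V v)) ∧
      (∀ (V : Type) [AddCommGroup V] [Module k V] [Module A V] [IsScalarTower k A V]
          [SMulCommClass k A V] [FiniteDimensional k V] (v : V),
        (theta k A 1).app V v = v) ∧
      (∀ (a b : A) (V : Type) [AddCommGroup V] [Module k V] [Module A V] [IsScalarTower k A V]
          [SMulCommClass k A V] [FiniteDimensional k V] (v : V),
        (theta k A (a + b)).app V v = (theta k A a).app V v + (theta k A b).app V v) ∧
      (∀ (c : k) (a : A) (V : Type) [AddCommGroup V] [Module k V] [Module A V]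
          [IsScalarTower k A V] [SMulCommClass k A V] [FiniteDimensional k V] (v : V),
        (theta k A (c • a)).app V v = c • (theta k A a).app V v) :=
  ⟨⟨theta_injective k A, theta_surjective k A⟩,
    fun a b _ _ _ _ _ _ _ v => mul_smul a b v,
    fun _ _ _ _ _ _ _ v => one_smul A v,
    fun a b _ _ _ _ _ _ _ v => add_smul a b v,
    fun c a _ _ _ _ _ _ _ v => smul_assoc c a v⟩
end
end

section
/- Let G be a finite group, k an algebraically closed field of characteristic 0, and J ∈ k[G]⊗k[G] a symmetric twist (J₂₁ = J). Then J is gauge equivalent to 1⊗1: there exists an invertible x ∈ k[G] with ε(x) = 1 such that J = Δ(x)(x⁻¹⊗x⁻¹), i.e. Δ(x) = J(x⊗x). -/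
open TensorProduct

noncomputable section

variable {k : Type*} [CommSemiring k] {A : Type*} [Semiring A] [Algebra k A]

/-- The flip of the two tensor factors of `A ⊗[k] A`. -/
def tau (x : A ⊗[k] A) : A ⊗[k] A := (Algebra.TensorProduct.comm k A A) x

/-- `Δ ⊗ id` as an algebra map `A ⊗ A → (A ⊗ A) ⊗ A`. -/
def D1 (Δ : A →ₐ[k] A ⊗[k] A) : (A ⊗[k] A) →ₐ[k] ((A ⊗[k] A) ⊗[k] A) :=
  Algebra.TensorProduct.map Δ (AlgHom.id k A)

/-- `id ⊗ Δ` as an algebra map `A ⊗ A → A ⊗ (A ⊗ A)`. -/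
def D2 (Δ : A →ₐ[k] A ⊗[k] A) : (A ⊗[k] A) →ₐ[k] (A ⊗[k] (A ⊗[k] A)) :=
  Algebra.TensorProduct.map (AlgHom.id k A) Δ

/-- `x ⊗ y ↦ (x ⊗ 1) ⊗ y`. -/
def e13 : (A ⊗[k] A) →ₐ[k] ((A ⊗[k] A) ⊗[k] A) :=
  Algebra.TensorProduct.map Algebra.TensorProduct.includeLeft (AlgHom.id k A)

/-- `x ⊗ y ↦ (1 ⊗ x) ⊗ y`. -/
def e23 : (A ⊗[k] A) →ₐ[k] ((A ⊗[k] A) ⊗[k] A) :=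
  Algebra.TensorProduct.map Algebra.TensorProduct.includeRight (AlgHom.id k A)

/-- `x ⊗ y ↦ (x ⊗ y) ⊗ 1`. -/
def e12 : (A ⊗[k] A) →ₐ[k] ((A ⊗[k] A) ⊗[k] A) :=
  Algebra.TensorProduct.includeLeft

/-- `x ⊗ y ↦ 1 ⊗ (x ⊗ y)`. -/
def e23r : (A ⊗[k] A) →ₐ[k] (A ⊗[k] (A ⊗[k] A)) :=
  Algebra.TensorProduct.includeRight

/-- The associator. -/
def assoc3 : ((A ⊗[k] A) ⊗[k] A) ≃ₐ[k] (A ⊗[k] (A ⊗[k] A)) :=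
  Algebra.TensorProduct.assoc k k k A A A

/-- `(A, R)` is quasitriangular with respect to the comultiplication `Δ`. -/
structure IsQuasitriangular (Δ : A →ₐ[k] A ⊗[k] A) (R : A ⊗[k] A) : Prop where
  isUnit : IsUnit R
  hex1 : D1 Δ R = e13 R * e23 R
  hex2 : D2 Δ R = assoc3 (e13 R * e12 R)
  intertwine : ∀ a : A, tau (Δ a) * R = R * Δ a

/-- `(A, R)` is triangular: quasitriangular and `R⁻¹ = R₂₁`. -/
structure IsTriangular (Δ : A →ₐ[k] A ⊗[k] A) (R : A ⊗[k] A)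
    extends IsQuasitriangular Δ R : Prop where
  unitary : R * tau R = 1

/-- A (Drinfeld) twist `J` for the bialgebra structure `(Δ, ε)`. -/
structure IsTwist (Δ : A →ₐ[k] A ⊗[k] A) (ε : A →ₐ[k] k) (J : A ⊗[k] A) : Prop where
  isUnit : IsUnit J
  cocycle : assoc3 (D1 Δ J * e12 J) = D2 Δ J * e23r J
  counit_left :
    (Algebra.TensorProduct.lid k A) ((Algebra.TensorProduct.map ε (AlgHom.id k A)) J) = 1
  counit_right :
    (Algebra.TensorProduct.rid k k A) ((Algebra.TensorProduct.map (AlgHom.id k A) ε) J) = 1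

/-- The twisted comultiplication `Δᴶ(x) = J⁻¹ Δ(x) J`. -/
def twistComul (Δ : A →ₐ[k] A ⊗[k] A) (J : A ⊗[k] A) (x : A) : A ⊗[k] A :=
  Ring.inverse J * Δ x * J

/-- The Drinfeld element `u = Σ S(bᵢ) aᵢ` of `R = Σ aᵢ ⊗ bᵢ`. -/
def drinfeldElement (S : A →ₗ[k] A) (R : A ⊗[k] A) : A :=
  LinearMap.mul' k A ((TensorProduct.map S LinearMap.id) (tau R))

/-- The standard comultiplication `Δ(g) = g ⊗ g` on a group algebra, as an algebra map. -/
def gComul (k G : Type*) [CommSemiring k] [Group G] :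
    MonoidAlgebra k G →ₐ[k] MonoidAlgebra k G ⊗[k] MonoidAlgebra k G :=
  MonoidAlgebra.lift k _ G
    { toFun := fun g => MonoidAlgebra.of k G g ⊗ₜ[k] MonoidAlgebra.of k G g
      map_one' := by simp [Algebra.TensorProduct.one_def, MonoidAlgebra.one_def]
      map_mul' := fun g h => by simp [Algebra.TensorProduct.tmul_mul_tmul] }

/-- The standard counit `ε(g) = 1` on a group algebra, as an algebra map. -/
def gCounit (k G : Type*) [CommSemiring k] [Group G] : MonoidAlgebra k G →ₐ[k] k :=
  MonoidAlgebra.lift k k G 1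

/-!
Replacing the comultiplication `Δ` of `H = k[G]` by `x ↦ J⁻¹ Δ(x)` and keeping the counit gives
a new coalgebra: coassociativity is the inverted cocycle identity for `J`, counitality is the
counit condition on `J`, and cocommutativity comes from `Δ₂₁ = Δ` and `J₂₁ = J`. Its dual is
therefore a finite-dimensional commutative `k`-algebra, which has a character because `k` is
algebraically closed. That character is evaluation at some `x ∈ H`, and its multiplicativity
says exactly that `J⁻¹ Δ(x) = x ⊗ x`, while `ε(x) = 1` because it preserves the unit. Applying
`m ∘ (S ⊗ id)` to `Δ(x) = J (x ⊗ x)` gives `S(x) · m(S ⊗ id)(J) · x = ε(x) = 1`, and a left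
invertible element of a finite-dimensional algebra is a unit.
-/

theorem map_ringInverse {S T F : Type*} [MonoidWithZero S] [MonoidWithZero T] [FunLike F S T]
    [MonoidHomClass F S T] (f : F) {a : S} (ha : IsUnit a) :
    f (Ring.inverse a) = Ring.inverse (f a) := by
  obtain ⟨u, rfl⟩ := ha
  simpa using (Ring.inverse_unit (Units.map (f : S →* T) u)).symm

namespace IsTwist

variable {R : Type*} [CommSemiring R] {H : Type*} [Semiring H] [Algebra R H]
  {Δ : H →ₐ[R] H ⊗[R] H} {ε : H →ₐ[R] R} {J : H ⊗[R] H}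

theorem map_counit_id_ringInverse (hJ : IsTwist Δ ε J) :
    Algebra.TensorProduct.map ε (AlgHom.id R H) (Ring.inverse J) = 1 := by
  have h : Algebra.TensorProduct.map ε (AlgHom.id R H) J = 1 :=
    (Algebra.TensorProduct.lid R H).injective (by rw [hJ.counit_left, map_one])
  rw [map_ringInverse _ hJ.isUnit, h, Ring.inverse_one]

theorem map_id_counit_ringInverse (hJ : IsTwist Δ ε J) :
    Algebra.TensorProduct.map (AlgHom.id R H) ε (Ring.inverse J) = 1 := by
  have h : Algebra.TensorProduct.map (AlgHom.id R H) ε J = 1 :=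
    (Algebra.TensorProduct.rid R R H).injective (by rw [hJ.counit_right, map_one])
  rw [map_ringInverse _ hJ.isUnit, h, Ring.inverse_one]

theorem cocycle_ringInverse (hJ : IsTwist Δ ε J) :
    assoc3 (e12 (Ring.inverse J) * D1 Δ (Ring.inverse J)) =
      e23r (Ring.inverse J) * D2 Δ (Ring.inverse J) := by
  set K := Ring.inverse J
  have hKJ : K * J = 1 := Ring.inverse_mul_cancel J hJ.isUnit
  have hJK : J * K = 1 := Ring.mul_inverse_cancel J hJ.isUnit
  have hleft : assoc3 (e12 K * D1 Δ K) * (D2 Δ J * e23r J) = 1 := by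
    rw [← hJ.cocycle, ← map_mul, mul_assoc, ← mul_assoc (D1 Δ K), ← map_mul, hKJ, map_one,
      one_mul, ← map_mul, hKJ, map_one, map_one]
  have hright : (D2 Δ J * e23r J) * (e23r K * D2 Δ K) = 1 := by
    rw [mul_assoc, ← mul_assoc (e23r J), ← map_mul, hJK, map_one, one_mul, ← map_mul, hJK,
      map_one]
  exact left_inv_eq_right_inv hleft hright

end IsTwist

namespace Bialgebra

variable {R : Type*} [CommSemiring R] {H : Type*} [Semiring H] [Bialgebra R H]

theorem rTensor_mulLeft_comp_comul_apply (K w : H ⊗[R] H) :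
    (LinearMap.mulLeft R K ∘ₗ Coalgebra.comul).rTensor H w =
      e12 K * D1 (comulAlgHom R H) w := by
  induction w using TensorProduct.induction_on with
  | zero => simp
  | tmul a b => simp [e12, D1, Algebra.TensorProduct.tmul_mul_tmul]
  | add x y hx hy => simp [hx, hy, mul_add]

theorem lTensor_mulLeft_comp_comul_apply (K w : H ⊗[R] H) :
    (LinearMap.mulLeft R K ∘ₗ Coalgebra.comul).lTensor H w =
      e23r K * D2 (comulAlgHom R H) w := by
  induction w using TensorProduct.induction_on with
  | zero => simp
  | tmul a b => simp [e23r, D2, Algebra.TensorProduct.tmul_mul_tmul]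
  | add x y hx hy => simp [hx, hy, mul_add]

end Bialgebra

theorem IsAlgClosed.nonempty_algHom_of_finiteDimensional {k B : Type*} [Field k] [IsAlgClosed k]
    [CommRing B] [Nontrivial B] [Algebra k B] [FiniteDimensional k B] :
    Nonempty (B →ₐ[k] k) := by
  obtain ⟨m, hm⟩ := Ideal.exists_maximal B
  let := Ideal.Quotient.field m
  have : Module.Finite k (B ⧸ m) :=
    Module.Finite.of_surjective (Ideal.Quotient.mkₐ k m).toLinearMap Ideal.Quotient.mk_surjective
  exact ⟨(IsAlgClosed.lift : B ⧸ m →ₐ[k] k).comp (Ideal.Quotient.mkₐ k m)⟩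

namespace Coalgebra

open WithConv

theorem counit_ne_zero {R C : Type*} [CommSemiring R] [AddCommMonoid C] [Module R C]
    [Coalgebra R C] [Nontrivial C] : (counit : C →ₗ[R] R) ≠ 0 := by
  intro h
  obtain ⟨x, hx⟩ := exists_ne (0 : C)
  have hx1 := rTensor_counit_comul (R := R) x
  rw [h, LinearMap.rTensor_zero, LinearMap.zero_apply] at hx1
  exact hx (by simpa using congr_arg (TensorProduct.lid R C) hx1.symm)

theorem convMul_apply_eq_dualDistrib {R C : Type*} [CommSemiring R] [AddCommMonoid C]
    [Module R C] [CoalgebraStruct R C] (φ ψ : Module.Dual R C) (x : C) :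
    (toConv φ * toConv ψ) x = dualDistrib R C C (φ ⊗ₜ ψ) (comul x) :=
  rfl

variable {k C : Type*} [Field k] [AddCommGroup C] [Module k C] [Coalgebra k C]
  [FiniteDimensional k C]

theorem exists_isGroupLikeElem_of_algHom (χ : WithConv (C →ₗ[k] k) →ₐ[k] k) :
    ∃ x : C, IsGroupLikeElem k x := by
  let x := (Module.evalEquiv k C).symm
    (χ.toLinearMap ∘ₗ (WithConv.linearEquiv k _).symm.toLinearMap)
  have hx (φ : Module.Dual k C) : φ x = χ (toConv φ) :=
    Module.apply_evalEquiv_symm_apply k C φ _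
  refine ⟨x, ?_, ?_⟩
  · rw [hx, ← map_one χ]
    rfl
  · have key (f : Module.Dual k (C ⊗[k] C)) : f (comul x) = f (x ⊗ₜ x) := by
      obtain ⟨t, rfl⟩ := (TensorProduct.dualDistribEquiv k C C).surjective f
      induction t using TensorProduct.induction_on with
      | zero => simp
      | tmul φ ψ =>
        change dualDistrib k C C (φ ⊗ₜ ψ) _ = dualDistrib k C C (φ ⊗ₜ ψ) _
        rw [← convMul_apply_eq_dualDistrib, hx, map_mul, TensorProduct.dualDistrib_apply, hx, hx]
      | add s t hs ht => simp only [map_add, LinearMap.add_apply, hs, ht]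
    exact sub_eq_zero.1 <|
      (Module.forall_dual_apply_eq_zero_iff k (comul x - x ⊗ₜ[k] x)).1 fun f => by simp [key f]

theorem exists_isGroupLikeElem [IsAlgClosed k] [IsCocomm k C] [Nontrivial C] :
    ∃ x : C, IsGroupLikeElem k x := by
  have : Nontrivial (WithConv (C →ₗ[k] k)) :=
    ⟨1, 0, fun h => counit_ne_zero (congrArg ofConv h)⟩
  have : FiniteDimensional k (WithConv (C →ₗ[k] k)) :=
    (WithConv.linearEquiv k _).symm.finiteDimensional
  obtain ⟨χ⟩ := IsAlgClosed.nonempty_algHom_of_finiteDimensional (k := k)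
    (B := WithConv (C →ₗ[k] k))
  exact exists_isGroupLikeElem_of_algHom χ

end Coalgebra

/-- `H` with the comultiplication `x ↦ J⁻¹ Δ(x)` and the counit of `H`. -/
def TwistedCoalgebra {R H : Type*} [CommSemiring R] [Semiring H] [Algebra R H]
    (_J : H ⊗[R] H) : Type _ :=
  H

namespace TwistedCoalgebra

variable {R : Type*} [CommRing R] {H : Type*} [Ring H] [Bialgebra R H] (J : H ⊗[R] H)

instance : AddCommGroup (TwistedCoalgebra J) := inferInstanceAs (AddCommGroup H)

instance : Module R (TwistedCoalgebra J) := inferInstanceAs (Module R H)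

def equiv : TwistedCoalgebra J ≃ₗ[R] H := LinearEquiv.refl R H

instance [Nontrivial H] : Nontrivial (TwistedCoalgebra J) := (equiv J).toEquiv.nontrivial

instance [Module.Finite R H] : Module.Finite R (TwistedCoalgebra J) :=
  Module.Finite.equiv (equiv J).symm

instance : CoalgebraStruct R (TwistedCoalgebra J) where
  comul := LinearMap.mulLeft R (Ring.inverse J) ∘ₗ Coalgebra.comul (R := R) (A := H)
  counit := Coalgebra.counit (R := R) (A := H)

variable [hJ : Fact (IsTwist (Bialgebra.comulAlgHom R H) (Bialgebra.counitAlgHom R H) J)]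

instance : Coalgebra R (TwistedCoalgebra J) where
  coassoc := LinearMap.ext fun (x : H) => by
    change assoc3 ((LinearMap.mulLeft R (Ring.inverse J) ∘ₗ Coalgebra.comul).rTensor H
        (Ring.inverse J * Coalgebra.comul (R := R) x)) =
      (LinearMap.mulLeft R (Ring.inverse J) ∘ₗ Coalgebra.comul).lTensor H
        (Ring.inverse J * Coalgebra.comul (R := R) x)
    rw [Bialgebra.rTensor_mulLeft_comp_comul_apply, Bialgebra.lTensor_mulLeft_comp_comul_apply,
      map_mul (D1 _), ← mul_assoc, map_mul assoc3, hJ.out.cocycle_ringInverse, map_mul (D2 _),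
      mul_assoc]
    congr 2
    exact Coalgebra.coassoc_apply x
  rTensor_counit_comp_comul := LinearMap.ext fun (x : H) => by
    change Algebra.TensorProduct.map (Bialgebra.counitAlgHom R H) (AlgHom.id R H)
      (Ring.inverse J * Bialgebra.comulAlgHom R H x) = 1 ⊗ₜ x
    rw [map_mul, hJ.out.map_counit_id_ringInverse, one_mul]
    exact Coalgebra.rTensor_counit_comul x
  lTensor_counit_comp_comul := LinearMap.ext fun (x : H) => by
    change Algebra.TensorProduct.map (AlgHom.id R H) (Bialgebra.counitAlgHom R H)
      (Ring.inverse J * Bialgebra.comulAlgHom R H x) = x ⊗ₜ 1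
    rw [map_mul, hJ.out.map_id_counit_ringInverse, one_mul]
    exact Coalgebra.lTensor_counit_comul x

instance [Coalgebra.IsCocomm R H] [hsym : Fact (tau J = J)] :
    Coalgebra.IsCocomm R (TwistedCoalgebra J) where
  comm_comp_comul := LinearMap.ext fun (x : H) => by
    change tau (Ring.inverse J * Coalgebra.comul (R := R) x) = Ring.inverse J * Coalgebra.comul x
    rw [tau, map_mul, map_ringInverse _ hJ.out.isUnit]
    exact congr_arg₂ (· * ·) (congr_arg Ring.inverse hsym.out) (Coalgebra.comm_comul R x)

theorem isGroupLikeElem_iff (x : TwistedCoalgebra J) :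
    IsGroupLikeElem R x ↔ Bialgebra.counitAlgHom R H (equiv J x) = 1 ∧
      Bialgebra.comulAlgHom R H (equiv J x) = J * (equiv J x ⊗ₜ equiv J x) := by
  rw [_root_.isGroupLikeElem_iff]
  exact and_congr Iff.rfl (Ring.inverse_mul_eq_iff_eq_mul J _ _ hJ.out.isUnit)

end TwistedCoalgebra

namespace HopfAlgebra

theorem mul'_rTensor_antipode_mul_tmul {R H : Type*} [CommSemiring R] [Semiring H]
    [HopfAlgebra R H] (w : H ⊗[R] H) (a b : H) :
    LinearMap.mul' R H ((antipode R).rTensor H (w * (a ⊗ₜ b))) =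
      antipode R a * LinearMap.mul' R H ((antipode R).rTensor H w) * b := by
  induction w using TensorProduct.induction_on with
  | zero => simp
  | tmul c d => simp [antipode_mul_antidistrib, mul_assoc]
  | add v w hv hw => simp [add_mul, mul_add, hv, hw]

theorem isUnit_of_comul_eq_mul_tmul {k H : Type*} [Field k] [Ring H] [HopfAlgebra k H]
    [FiniteDimensional k H] {J : H ⊗[k] H} {x : H} (hε : Bialgebra.counitAlgHom k H x = 1)
    (hΔ : Bialgebra.comulAlgHom k H x = J * (x ⊗ₜ x)) : IsUnit x := by
  have hinv : antipode k x * LinearMap.mul' k H ((antipode k).rTensor H J) * x = 1 := by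
    rw [← mul'_rTensor_antipode_mul_tmul, ← hΔ]
    simp [show Coalgebra.counit (R := k) x = 1 from hε]
  have : IsArtinianRing H := IsArtinianRing.of_finite k H
  exact IsUnit.of_mul_eq_one_right _ hinv

end HopfAlgebra

theorem IsTwist.exists_isUnit_comul_eq_mul_tmul {k H : Type*} [Field k] [IsAlgClosed k] [Ring H]
    [HopfAlgebra k H] [Coalgebra.IsCocomm k H] [FiniteDimensional k H] {J : H ⊗[k] H}
    (hJ : IsTwist (Bialgebra.comulAlgHom k H) (Bialgebra.counitAlgHom k H) J)
    (hsym : tau J = J) :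
    ∃ x : H, IsUnit x ∧ Bialgebra.counitAlgHom k H x = 1 ∧
      Bialgebra.comulAlgHom k H x = J * (x ⊗ₜ[k] x) := by
  have : Fact (IsTwist (Bialgebra.comulAlgHom k H) (Bialgebra.counitAlgHom k H) J) := ⟨hJ⟩
  have : Fact (tau J = J) := ⟨hsym⟩
  have : Nontrivial H := Bialgebra.nontrivial k
  obtain ⟨x, hx⟩ := Coalgebra.exists_isGroupLikeElem (k := k) (C := TwistedCoalgebra J)
  obtain ⟨hε, hΔ⟩ := (TwistedCoalgebra.isGroupLikeElem_iff J x).1 hx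
  exact ⟨_, HopfAlgebra.isUnit_of_comul_eq_mul_tmul hε hΔ, hε, hΔ⟩

theorem gComul_eq_comulAlgHom (k G : Type*) [CommSemiring k] [Group G] :
    gComul k G = Bialgebra.comulAlgHom k (MonoidAlgebra k G) := by
  ext g
  simp [gComul]

theorem gCounit_eq_counitAlgHom (k G : Type*) [CommSemiring k] [Group G] :
    gCounit k G = Bialgebra.counitAlgHom k (MonoidAlgebra k G) := by
  ext g
  simp [gCounit]

theorem symmetric_twist_is_gauge_trivial_general
    {k : Type*} [Field k] [IsAlgClosed k]
    {G : Type*} [Group G] [Fintype G]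
    (J : MonoidAlgebra k G ⊗[k] MonoidAlgebra k G)
    (hJ : IsTwist (gComul k G) (gCounit k G) J)
    (hsym : tau J = J) :
    ∃ x : MonoidAlgebra k G, IsUnit x ∧ gCounit k G x = 1 ∧
      gComul k G x = J * (x ⊗ₜ[k] x) := by
  rw [gComul_eq_comulAlgHom, gCounit_eq_counitAlgHom] at hJ ⊢
  exact hJ.exists_isUnit_comul_eq_mul_tmul hsym

/-- Over an algebraically closed field of characteristic `0`, any symmetric
twist `J` (i.e. `J₂₁ = J`) for the group algebra of a finite group `G` is gauge equivalent to
`1 ⊗ 1`: there is an invertible `x ∈ k[G]` with `ε(x) = 1` and `Δ(x) = J (x ⊗ x)`. -/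
theorem symmetric_twist_is_gauge_trivial
    {k : Type*} [Field k] [IsAlgClosed k] [CharZero k]
    {G : Type*} [Group G] [Fintype G]
    (J : MonoidAlgebra k G ⊗[k] MonoidAlgebra k G)
    (hJ : IsTwist (gComul k G) (gCounit k G) J)
    (hsym : tau J = J) :
    ∃ x : MonoidAlgebra k G, IsUnit x ∧ gCounit k G x = 1 ∧
      gComul k G x = J * (x ⊗ₜ[k] x) :=
  symmetric_twist_is_gauge_trivial_general J hJ hsym
end
end
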